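/- The higher reducibility relations hold: Σ_{a_1,...,a_n} Z^{a_1...a_n}_{b_1...b_{n+1}} · Z^{c_1...c_{n-1}}_{a_1...a_n} = 0 in A, where the product is multiplication in A, for all n ≥ 1 and all index values. -/

import Mathlib

variable {k : Type*} [Field k] {A : Type*} [Ring A] [Algebra k A]
variable {ι : Type*} [DecidableEq ι]

/-- The component tensors `Z^{a_1...a_n}_{b_1...b_{n+1}} ∈ A`, defined recursively by
`Z_{b} = t_b` (no upper indices), `Z^a_{bc} = t_b δ^a_c − f^a_{bc}`, and
`Z^{a_1...a_n}_{b_1...b_{n+1}} = Z^{a_1...a_{n-1}}_{b_1...b_n} δ^{a_n}_{b_{n+1}}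
  + (−1)^n δ^{a_1}_{b_1}⋯δ^{a_{n-1}}_{b_{n-1}} f^{a_n}_{b_n b_{n+1}}`. -/
def Zcomp (t : ι → A) (f : ι → ι → ι → k) :
    (n : ℕ) → (Fin n → ι) → (Fin (n + 1) → ι) → A
  | 0, _, b => t (b 0)
  | n + 1, a, b =>
      (if a (Fin.last n) = b (Fin.last (n + 1)) then
          Zcomp t f n (fun i => a i.castSucc) (fun i => b i.castSucc)
        else 0)
      + ((-1 : k) ^ (n + 1) *
          (if ∀ i : Fin n, a i.castSucc = b i.castSucc.castSucc then
            f (b (Fin.last n).castSucc) (b (Fin.last (n + 1))) (a (Fin.last n))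
          else 0)) • (1 : A)

/-!
Split every tuple by `Fin.snoc` into its initial part and its last entry. The recursion then
reads `Z_{m+1} = Z_m ⊗ 1 + (-1)^(m+1) (1 ⊗ ⋯ ⊗ 1 ⊗ f)`, where `f` is the multiplication of `A`
written in the basis. In the product `Z_{n+2} Z_{n+1}` the term `(Z_{n+1} ⊗ 1)(Z_n ⊗ 1)` is
`(Z_{n+1} Z_n) ⊗ 1`, which vanishes by induction. The two mixed terms `Z_n ⊗ f` occur with
opposite signs. The two terms quadratic in `f` cancel because the structure constants are
associative. The base case `Z_1 Z_0 = 0` is the multiplication table `t_b t_c = Σ_a f^a_{bc} t_a`.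
-/

open Finset

lemma Fin.sum_pi_succ_eq_sum_snoc {α M : Type*} [Fintype α] [AddCommMonoid M] {m : ℕ}
    (g : (Fin (m + 1) → α) → M) : ∑ a, g a = ∑ a : Fin m → α, ∑ e, g (Fin.snoc a e) := by
  rw [← (Fin.snocEquiv fun _ => α).sum_comp, Fintype.sum_prod_type_right]
  rfl

lemma Fin.sum_pi_succ_ite_init_eq {α M : Type*} [Fintype α] [DecidableEq α] [AddCommMonoid M]
    {m : ℕ} (c : Fin m → α) (g : (Fin (m + 1) → α) → M) :
    ∑ a, (if c = Fin.init a then g a else 0) = ∑ e, g (Fin.snoc c e) := by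
  rw [Fin.sum_pi_succ_eq_sum_snoc, Finset.sum_comm]
  simp [Fin.init_snoc]

lemma structConst_assoc [Fintype ι] (B : Module.Basis ι k A) (f : ι → ι → ι → k)
    (hf : ∀ x y, B x * B y = ∑ z, f x y z • B z) (p q r s : ι) :
    ∑ e, f p q e * f e r s = ∑ e, f q r e * f p e s := by
  have h := congrArg (fun x => B.repr x s) (mul_assoc (B p) (B q) (B r))
  simpa [hf, sum_mul, mul_sum, smul_mul_assoc, mul_smul_comm, Finsupp.single_apply] using h

section

variable (t : ι → A) (f : ι → ι → ι → k)

lemma Zcomp_succ_snoc_snoc (n : ℕ) (a : Fin n → ι) (e : ι) (b : Fin (n + 1) → ι) (β : ι) :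
    Zcomp t f (n + 1) (Fin.snoc a e) (Fin.snoc b β) =
      (if e = β then Zcomp t f n a b else 0) +
        ((-1 : k) ^ (n + 1) * if a = Fin.init b then f (b (Fin.last n)) β e else 0) • 1 := by
  simp [Zcomp, funext_iff, Fin.init]

variable [Fintype ι]

lemma sum_Zcomp_succ_snoc_mul (n : ℕ) (b : Fin (n + 1) → ι) (β : ι)
    (X : (Fin (n + 1) → ι) → A) :
    ∑ a, Zcomp t f (n + 1) a (Fin.snoc b β) * X a =
      ∑ a, Zcomp t f n a b * X (Fin.snoc a β) +
        (-1 : k) ^ (n + 1) • ∑ e, f (b (Fin.last n)) β e • X (Fin.snoc (Fin.init b) e) := by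
  simp only [Fin.sum_pi_succ_eq_sum_snoc (fun a => Zcomp t f (n + 1) a _ * X a),
    Zcomp_succ_snoc_snoc, add_mul, sum_add_distrib, ite_mul, zero_mul, sum_ite_eq', mem_univ,
    if_true, smul_mul_assoc, one_mul, mul_smul, ite_smul, zero_smul, smul_sum]
  rw [sum_comm (s := univ) (t := univ)]
  simp

lemma sum_mul_Zcomp_succ_snoc_snoc (n : ℕ) (Y : (Fin (n + 1) → ι) → A) (c : Fin n → ι)
    (γ β : ι) :
    ∑ a, Y a * Zcomp t f (n + 1) (Fin.snoc c γ) (Fin.snoc a β) =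
      (if γ = β then ∑ a, Y a * Zcomp t f n c a else 0) +
        (-1 : k) ^ (n + 1) • ∑ e, f e β γ • Y (Fin.snoc c e) := by
  simp only [Zcomp_succ_snoc_snoc, mul_add, sum_add_distrib, mul_smul_comm, mul_one, mul_ite,
    mul_zero, ite_smul, zero_smul, Fin.sum_pi_succ_ite_init_eq, sum_ite_irrel, Fin.snoc_last,
    smul_sum, smul_smul, sum_const_zero]

lemma sum_Zcomp_one_mul_Zcomp_zero_eq_zero (ht : ∀ x y, t x * t y = ∑ z, f x y z • t z)
    (b : Fin 2 → ι) (c : Fin 0 → ι) :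
    ∑ a, Zcomp t f 1 a b * Zcomp t f 0 c a = 0 := by
  rw [← Fin.snoc_init_self b, sum_Zcomp_succ_snoc_mul]
  simp [Zcomp, Fin.snoc_zero, Fin.init, ht]

lemma sum_Zcomp_succ_snoc_mul_Zcomp_snoc
    (hassoc : ∀ p q r s, ∑ e, f p q e * f e r s = ∑ e, f q r e * f p e s)
    (n : ℕ) (b : Fin (n + 2) → ι) (β : ι) (c : Fin n → ι) (γ : ι) :
    ∑ a, Zcomp t f (n + 2) a (Fin.snoc b β) * Zcomp t f (n + 1) (Fin.snoc c γ) a =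
      if γ = β then ∑ a, Zcomp t f (n + 1) a b * Zcomp t f n c a else 0 := by
  cases b using Fin.snocCases with | _ b β' => ?_
  rw [sum_Zcomp_succ_snoc_mul, sum_mul_Zcomp_succ_snoc_snoc]
  simp only [Zcomp_succ_snoc_snoc, Fin.init_snoc, Fin.snoc_last, smul_add, sum_add_distrib]
  simp only [smul_ite, smul_zero, sum_ite_eq, sum_ite_eq', mem_univ, if_true, mul_ite, mul_zero,
    ite_smul, zero_smul, sum_ite_irrel, sum_const_zero, smul_zero]
  have hs : (-1 : k) ^ (n + 1 + 1) = -(-1) ^ (n + 1) := by ring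
  by_cases hc : c = Fin.init b
  · have key : ∑ e, f e β γ * f (b (Fin.last n)) β' e = ∑ e, f β' β e * f (b (Fin.last n)) e γ :=
      (sum_congr rfl fun _ _ => mul_comm _ _).trans (hassoc _ _ _ _)
    simp only [hc, if_true, smul_smul, ← sum_smul, hs,
      mul_left_comm (f _ _ _) ((-1 : k) ^ (n + 1)), ← mul_sum, key]
    module
  · simp only [hc, if_false, add_zero, hs]
    module

end

/-- the higher reducibility relations
`Σ_{a_1,...,a_n} Z^{a_1...a_n}_{b_1...b_{n+1}} · Z^{c_1...c_{n-1}}_{a_1...a_n} = 0` in `A`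
(product in `A`), for all `n ≥ 1` and all index values (paper's `n` is `n + 1` below). -/
theorem higher_reducibility_relations
    [Fintype ι] (B : Module.Basis ι k A) (f : ι → ι → ι → k)
    (hf : ∀ a b : ι, B a * B b = ∑ c : ι, f a b c • B c) :
    ∀ (n : ℕ) (b : Fin (n + 2) → ι) (c : Fin n → ι),
      ∑ a : Fin (n + 1) → ι, Zcomp (⇑B) f (n + 1) a b * Zcomp (⇑B) f n c a = 0 := by
  intro n
  induction n with
  | zero => exact sum_Zcomp_one_mul_Zcomp_zero_eq_zero B f hf
  | succ n ih =>
    intro b c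
    rw [← Fin.snoc_init_self b, ← Fin.snoc_init_self c,
      sum_Zcomp_succ_snoc_mul_Zcomp_snoc B f (structConst_assoc B f hf), ih, ite_self]
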